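/- arXiv:2402.04791 — 9 statements merged into one kernel-verified Lean document; each statement's English description precedes it below -/
import Mathlib

section
/- For every positive integer q there exists n₀ ∈ ℕ such that for all n ≥ n₀, the chromatic mutual-visibility number of the n-dimensional hypercube satisfies χ_μ(Q_n) > q; that is, χ_μ(Q_n) tends to infinity as n → ∞. -/
/-- The `n`-dimensional hypercube: vertices are subsets of `{1,…,n}` (modeled as
`Finset (Fin n)`), with `A` and `B` adjacent iff their symmetric difference has size 1. -/
def hypercube (n : ℕ) : SimpleGraph (Finset (Fin n)) where
  Adj A B := (symmDiff A B).card = 1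
  symm := ⟨fun A B h => by simpa only [symmDiff_comm] using h⟩
  loopless := ⟨fun A h => by simp [symmDiff_self] at h⟩

/-- `u` and `v` are `M`-visible in `G`: there is a shortest `u,v`-path containing
no vertex of `M` as an internal vertex. -/
def IsVisiblePair {V : Type*} (G : SimpleGraph V) (M : Set V) (u v : V) : Prop :=
  ∃ p : G.Walk u v, p.IsPath ∧ p.length = G.dist u v ∧
    ∀ x ∈ p.support, x ∈ M → x = u ∨ x = v

/-- `M` is a mutual-visibility set in `G`. -/
def IsMutualVisibilitySet {V : Type*} (G : SimpleGraph V) (M : Set V) : Prop :=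
  ∀ u ∈ M, ∀ v ∈ M, IsVisiblePair G M u v

/-- `M` is a total mutual-visibility set in `G`. -/
def IsTotalMutualVisibilitySet {V : Type*} (G : SimpleGraph V) (M : Set V) : Prop :=
  ∀ u v : V, IsVisiblePair G M u v

/-- The mutual-visibility number `μ(Q_n)`. -/
noncomputable def mu (n : ℕ) : ℕ :=
  sSup {k | ∃ M : Set (Finset (Fin n)), IsMutualVisibilitySet (hypercube n) M ∧ M.ncard = k}

/-- The total mutual-visibility number `μ_t(Q_n)`. -/
noncomputable def muTotal (n : ℕ) : ℕ :=
  sSup {k | ∃ M : Set (Finset (Fin n)), IsTotalMutualVisibilitySet (hypercube n) M ∧ M.ncard = k}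

/-- The chromatic mutual-visibility number `χ_μ(Q_n)`: the least number of colors in a
vertex-coloring of `Q_n` in which every color class is a mutual-visibility set. -/
noncomputable def chiMu (n : ℕ) : ℕ :=
  sInf {k | ∃ c : Finset (Fin n) → Fin k, ∀ i : Fin k,
    IsMutualVisibilitySet (hypercube n) {A | c A = i}}

/-- The total chromatic mutual-visibility number `χ_μ^total(Q_n)`. -/
noncomputable def chiMuTotal (n : ℕ) : ℕ :=
  sInf {k | ∃ c : Finset (Fin n) → Fin k, ∀ i : Fin k,
    IsTotalMutualVisibilitySet (hypercube n) {A | c A = i}}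

/-- A family `F` of `r`-element subsets of `[n]` contains an `(r,s,t)`-daisy if there are
`A ⊆ B` with `|A| = r - t` and `|B| = r + s - t` such that every `r`-set `T` with
`A ⊆ T ⊆ B` belongs to `F`. -/
def ContainsDaisy (n r s t : ℕ) (F : Finset (Finset (Fin n))) : Prop :=
  ∃ A B : Finset (Fin n), A ⊆ B ∧ A.card = r - t ∧ B.card = r + s - t ∧
    ∀ T : Finset (Fin n), A ⊆ T → T ⊆ B → T.card = r → T ∈ F

/-- The Turán number `ex(n, D_r(s,t))`: the largest size of a family of `r`-element
subsets of `[n]` containing no `(r,s,t)`-daisy. -/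
noncomputable def daisyTuran (n r s t : ℕ) : ℕ :=
  sSup {k | ∃ F : Finset (Finset (Fin n)), (∀ T ∈ F, T.card = r) ∧
    ¬ ContainsDaisy n r s t F ∧ F.card = k}

/-!
Hypergraph Ramsey, applied to one cardinality at a time, gives for every colouring of `Q_n` with
`k` colours (`n` large) a set `Y` of `2k` coordinates on whose subsets the colour depends only on
the cardinality. By pigeonhole three levels `a < m < b ≤ 2k` share a colour; take `u ⊆ v ⊆ Y` of
sizes `a` and `b`. A geodesic from `u` to `v` runs through subsets of `v`, so it meets level `m`,
which carries the colour of `u` and `v`: that colour class is not a mutual-visibility set.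
-/

open Finset
open scoped symmDiff

namespace Finset

variable {α : Type*} [DecidableEq α]

lemma subset_union_of_card_symmDiff_add_le {u v x : Finset α}
    (h : #(u ∆ x) + #(x ∆ v) ≤ #(u ∆ v)) : x ⊆ u ∪ v := by
  intro y hyx
  by_contra hyuv
  simp only [mem_union, not_or] at hyuv
  have hyu : y ∈ u ∆ x := mem_symmDiff.2 (Or.inr ⟨hyx, hyuv.1⟩)
  have hyv : y ∈ x ∆ v := mem_symmDiff.2 (Or.inl ⟨hyx, hyuv.2⟩)
  have hinter : 1 ≤ #(u ∆ x ∩ x ∆ v) := card_pos.2 ⟨y, mem_inter.2 ⟨hyu, hyv⟩⟩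
  have htri : #(u ∆ v) ≤ #(u ∆ x ∪ x ∆ v) := card_le_card (symmDiff_triangle u x v)
  have := card_union_add_card_inter (u ∆ x) (x ∆ v)
  omega

end Finset

lemma SimpleGraph.Walk.exists_mem_support_eq {V : Type*} {G : SimpleGraph V} (f : V → ℕ)
    (hf : ∀ x y, G.Adj x y → f y ≤ f x + 1) {u v : V} (p : G.Walk u v) {m : ℕ}
    (hu : f u ≤ m) (hv : m ≤ f v) : ∃ x ∈ p.support, f x = m := by
  induction p with
  | nil => exact ⟨_, SimpleGraph.Walk.start_mem_support _, by omega⟩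
  | @cons u w v h p ih =>
    rcases hu.eq_or_lt with hum | hum
    · exact ⟨u, (p.cons h).start_mem_support, hum⟩
    · obtain ⟨x, hx, hxm⟩ := ih (by have := hf u w h; omega) hv
      exact ⟨x, List.mem_cons_of_mem u hx, hxm⟩

section Hypercube

variable {n : ℕ}

lemma hypercube_adj {A B : Finset (Fin n)} : (hypercube n).Adj A B ↔ #(A ∆ B) = 1 := Iff.rfl

lemma card_le_card_add_one_of_hypercube_adj {A B : Finset (Fin n)}
    (h : (hypercube n).Adj A B) : #B ≤ #A + 1 :=
  calc #B ≤ #(A ∆ B ∪ A) := card_le_card (le_symmDiff_sup_left A B)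
    _ ≤ #(A ∆ B) + #A := card_union_le _ _
    _ = #A + 1 := by rw [hypercube_adj.1 h, add_comm]

lemma card_symmDiff_le_length {A B : Finset (Fin n)} (p : (hypercube n).Walk A B) :
    #(A ∆ B) ≤ p.length := by
  induction p with
  | nil => simp
  | @cons A B C h p ih =>
    calc #(A ∆ C) ≤ #(A ∆ B ∪ B ∆ C) := card_le_card (symmDiff_triangle A B C)
      _ ≤ #(A ∆ B) + #(B ∆ C) := card_union_le _ _
      _ ≤ p.length + 1 := by rw [hypercube_adj.1 h]; omega
      _ = (p.cons h).length := (SimpleGraph.Walk.length_cons h p).symm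

lemma exists_hypercube_walk_length_eq (A D : Finset (Fin n)) :
    ∃ p : (hypercube n).Walk A (A ∆ D), p.length = #D := by
  induction D using Finset.induction_on generalizing A with
  | empty => exact ⟨SimpleGraph.Walk.nil.copy rfl (symmDiff_bot A).symm, by simp⟩
  | insert x D hx ih =>
    obtain ⟨p, hp⟩ := ih (A ∆ {x})
    have hadj : (hypercube n).Adj A (A ∆ {x}) := by
      rw [hypercube_adj, symmDiff_symmDiff_cancel_left, card_singleton]
    have hend : A ∆ {x} ∆ D = A ∆ insert x D := by
      rw [symmDiff_assoc, insert_eq, (disjoint_singleton_left.2 hx).symmDiff_eq_sup]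
      rfl
    exact ⟨(p.cons hadj).copy rfl hend, by simp [hp, card_insert_of_notMem hx]⟩

lemma hypercube_dist (A B : Finset (Fin n)) : (hypercube n).dist A B = #(A ∆ B) := by
  have hwalk := exists_hypercube_walk_length_eq A (A ∆ B)
  rw [symmDiff_symmDiff_cancel_left] at hwalk
  obtain ⟨p, hp⟩ := hwalk
  obtain ⟨q, hq⟩ := p.reachable.exists_walk_length_eq_dist
  exact le_antisymm (hp ▸ SimpleGraph.dist_le p) (hq ▸ card_symmDiff_le_length q)

lemma subset_union_of_mem_support_of_length_eq {u v x : Finset (Fin n)}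
    (p : (hypercube n).Walk u v) (hp : p.length = #(u ∆ v)) (hx : x ∈ p.support) :
    x ⊆ u ∪ v := by
  refine subset_union_of_card_symmDiff_add_le ?_
  have hsplit := congrArg SimpleGraph.Walk.length (p.take_spec hx)
  rw [SimpleGraph.Walk.length_append] at hsplit
  have := card_symmDiff_le_length (p.takeUntil x hx)
  have := card_symmDiff_le_length (p.dropUntil x hx)
  omega

theorem IsMutualVisibilitySet.exists_notMem_of_subset {M : Set (Finset (Fin n))}
    (hM : IsMutualVisibilitySet (hypercube n) M) {u v : Finset (Fin n)} (hu : u ∈ M)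
    (hv : v ∈ M) (huv : u ⊆ v) {m : ℕ} (hum : #u < m) (hmv : m < #v) :
    ∃ X ⊆ v, #X = m ∧ X ∉ M := by
  obtain ⟨p, -, hlen, hvis⟩ := hM u hu v hv
  rw [hypercube_dist] at hlen
  obtain ⟨X, hXp, hXm⟩ := p.exists_mem_support_eq card
    (fun _ _ => card_le_card_add_one_of_hypercube_adj) hum.le hmv.le
  refine ⟨X, union_eq_right.2 huv ▸ subset_union_of_mem_support_of_length_eq p hlen hXp, hXm,
    fun hXM => ?_⟩
  rcases hvis X hXp hXM with rfl | rfl <;> omega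

end Hypercube

/-- The bound of the Erdős–Rado proof: for `t + 1` one needs an end-homogeneous set of size
`k * s + 1`, built by splitting off minima, each step costing a `t`-uniform Ramsey set. -/
def ramseyBound (k : ℕ) : ℕ → ℕ → ℕ
  | 0, s => s
  | t + 1, s => (fun N => ramseyBound k t N + 1)^[k * s + 1] 0

def IsRamseyBound (α : Type*) (k t : ℕ) (R : ℕ → ℕ) : Prop :=
  ∀ (s : ℕ) (S : Finset α) (c : Finset α → Fin k), R s ≤ #S →
    ∃ Y ⊆ S, s ≤ #Y ∧ ∃ κ, ∀ T ⊆ Y, #T = t → c T = κ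

section Ramsey

variable {α : Type*} [LinearOrder α] {k : ℕ}

lemma exists_endHomogeneous {t : ℕ} {R : ℕ → ℕ} (hR : IsRamseyBound α k t R) (m : ℕ)
    (S : Finset α) (c : Finset α → Fin k) (hS : (fun N => R N + 1)^[m] 0 ≤ #S) :
    ∃ X ⊆ S, m ≤ #X ∧ ∃ f : α → Fin k, ∀ x ∈ X, ∀ T ⊆ X, (∀ y ∈ T, x < y) → #T = t →
      c (insert x T) = f x := by
  induction m generalizing S with
  | zero => exact ⟨∅, empty_subset S, le_rfl, fun _ => c ∅, by simp⟩
  | succ m ih =>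
    rw [Function.iterate_succ_apply'] at hS
    have hSne : S.Nonempty := card_pos.1 (by omega)
    set x₀ := S.min' hSne
    have hx₀ : x₀ ∈ S := S.min'_mem hSne
    obtain ⟨Y, hYS, hY, κ₀, hκ₀⟩ := hR ((fun N => R N + 1)^[m] 0) (S.erase x₀)
      (fun T => c (insert x₀ T)) (by rw [card_erase_of_mem hx₀]; omega)
    obtain ⟨X, hXY, hX, f, hf⟩ := ih Y hY
    have hXS : X ⊆ S.erase x₀ := hXY.trans hYS
    have hx₀X : x₀ ∉ X := fun h => notMem_erase x₀ S (hXS h)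
    have hinsS : insert x₀ X ⊆ S := insert_subset hx₀ (hXS.trans (erase_subset x₀ S))
    refine ⟨insert x₀ X, hinsS, ?_, Function.update f x₀ κ₀, ?_⟩
    · rw [card_insert_of_notMem hx₀X]; omega
    intro x hx T hTins hxT hTt
    have hx₀x : x₀ ≤ x := S.min'_le x (hinsS hx)
    have hTX : T ⊆ X := fun y hy =>
      (mem_insert.1 (hTins hy)).resolve_left (hx₀x.trans_lt (hxT y hy)).ne'
    rcases mem_insert.1 hx with rfl | hx
    · rw [Function.update_self]; exact hκ₀ T (hTX.trans hXY) hTt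
    · rw [Function.update_of_ne (by rintro rfl; exact hx₀X hx)]
      exact hf x hx T hTX hxT hTt

theorem isRamseyBound_ramseyBound (k t : ℕ) : IsRamseyBound α k t (ramseyBound k t) := by
  induction t with
  | zero =>
    intro s S c hS
    exact ⟨S, subset_refl S, hS, c ∅, fun T _ hT => by rw [card_eq_zero.1 hT]⟩
  | succ t ih =>
    intro s S c hS
    obtain ⟨X, hXS, hX, f, hf⟩ := exists_endHomogeneous ih (k * s + 1) S c hS
    obtain ⟨κ, -, hκ⟩ := exists_lt_card_fiber_of_mul_lt_card_of_maps_to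
      (fun x _ => mem_univ (f x)) (show #(univ : Finset (Fin k)) * s < #X by simp; omega)
    refine ⟨X.filter (f · = κ), (filter_subset _ X).trans hXS, hκ.le, κ, fun T hTY hT => ?_⟩
    have hTne : T.Nonempty := card_pos.1 (by omega)
    set x := T.min' hTne
    have hxT : x ∈ T := T.min'_mem hTne
    obtain ⟨hxX, hfx⟩ := mem_filter.1 (hTY hxT)
    have hTX : T.erase x ⊆ X := (erase_subset x T).trans (hTY.trans (filter_subset _ X))
    rw [← insert_erase hxT, hf x hxX _ hTX (fun y => T.min'_lt_of_mem_erase_min' hTne)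
      (by rw [card_erase_of_mem hxT, hT]; rfl), hfx]

def levelRamseyBound (k : ℕ) : ℕ → ℕ → ℕ
  | 0, s => s
  | J + 1, s => ramseyBound k J (levelRamseyBound k J s)

theorem exists_levelHomogeneous (J s : ℕ) (S : Finset α) (c : Finset α → Fin k)
    (hS : levelRamseyBound k J s ≤ #S) :
    ∃ Y ⊆ S, s ≤ #Y ∧ ∃ κ : ℕ → Fin k, ∀ T ⊆ Y, #T < J → c T = κ #T := by
  induction J generalizing S with
  | zero => exact ⟨S, subset_refl S, hS, fun _ => c ∅, fun T _ hT => absurd hT (by omega)⟩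
  | succ J ih =>
    obtain ⟨Y₁, hY₁S, hY₁, κ₁, hκ₁⟩ := isRamseyBound_ramseyBound k J _ S c hS
    obtain ⟨Y, hYY₁, hY, κ, hκ⟩ := ih Y₁ hY₁
    refine ⟨Y, hYY₁.trans hY₁S, hY, Function.update κ J κ₁, fun T hTY hT => ?_⟩
    rcases (Nat.lt_succ_iff.1 hT).eq_or_lt with hTJ | hTJ
    · rw [hTJ, Function.update_self]; exact hκ₁ T (hTY.trans hYY₁) hTJ
    · rw [Function.update_of_ne hTJ.ne]; exact hκ T hTY hTJ

end Ramsey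

lemma exists_three_lt_of_fintype {β : Type*} [Fintype β] (κ : ℕ → β) :
    ∃ a m b, a < m ∧ m < b ∧ b ≤ 2 * Fintype.card β ∧ κ m = κ a ∧ κ b = κ a := by
  classical
  obtain ⟨i, -, hi⟩ := exists_lt_card_fiber_of_mul_lt_card_of_maps_to (n := 2)
    (fun j (_ : j ∈ range (2 * Fintype.card β + 1)) => mem_univ (κ j))
    (by simp only [card_univ, card_range]; omega)
  set F := (range (2 * Fintype.card β + 1)).filter (κ · = i)
  let e := F.orderEmbOfFin rfl
  have he (j : Fin #F) : e j < 2 * Fintype.card β + 1 ∧ κ (e j) = i := by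
    have := F.orderEmbOfFin_mem rfl j
    simpa only [F, mem_filter, mem_range] using this
  refine ⟨e ⟨0, by omega⟩, e ⟨1, by omega⟩, e ⟨2, hi⟩, e.strictMono (by simp),
    e.strictMono (by simp [Fin.lt_def]), Nat.lt_succ_iff.1 (he _).1, ?_, ?_⟩ <;>
    simp only [(he _).2]

theorem exists_colorClass_not_isMutualVisibilitySet {n k : ℕ} (c : Finset (Fin n) → Fin k)
    (hn : levelRamseyBound k (2 * k + 1) (2 * k) ≤ n) :
    ∃ i, ¬ IsMutualVisibilitySet (hypercube n) {A | c A = i} := by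
  obtain ⟨Y, -, hY, κ, hκ⟩ := exists_levelHomogeneous (2 * k + 1) (2 * k) univ c (by simpa)
  obtain ⟨a, m, b, ham, hmb, hb, hκm, hκb⟩ := exists_three_lt_of_fintype κ
  rw [Fintype.card_fin] at hb
  obtain ⟨v, hvY, hv⟩ := exists_subset_card_eq (show b ≤ #Y by omega)
  obtain ⟨u, huv, hu⟩ := exists_subset_card_eq (show a ≤ #v by omega)
  have hcolor : ∀ T ⊆ v, c T = κ #T := fun T hT =>
    hκ T (hT.trans hvY) (by have := card_le_card hT; omega)
  refine ⟨κ a, fun hM => ?_⟩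
  obtain ⟨X, hXv, hX, hXM⟩ := hM.exists_notMem_of_subset (u := u) (v := v)
    (by simp [hcolor u huv, hu]) (by simp [hcolor v le_rfl, hv, hκb]) huv
    (hu ▸ ham) (hv ▸ hmb)
  exact hXM (by simp [hcolor X hXv, hX, hκm])

lemma isMutualVisibilitySet_of_subsingleton {V : Type*} (G : SimpleGraph V) {M : Set V}
    (hM : M.Subsingleton) : IsMutualVisibilitySet G M := by
  intro u hu v hv
  obtain rfl := hM hu hv
  exact ⟨.nil, .nil, by simp, fun x hx _ => Or.inl (by simpa using hx)⟩

lemma lt_chiMu {n q : ℕ} (h : ∀ k ≤ q, ∀ c : Finset (Fin n) → Fin k,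
    ∃ i, ¬ IsMutualVisibilitySet (hypercube n) {A | c A = i}) : q < chiMu n := by
  have hne : {k | ∃ c : Finset (Fin n) → Fin k, ∀ i : Fin k,
      IsMutualVisibilitySet (hypercube n) {A | c A = i}}.Nonempty :=
    ⟨_, Fintype.equivFin _, fun i =>
      isMutualVisibilitySet_of_subsingleton _ fun _ hA _ hB => (Fintype.equivFin _).injective
        (hA.trans hB.symm)⟩
  obtain ⟨c, hc⟩ := Nat.sInf_mem hne
  by_contra! hle
  obtain ⟨i, hi⟩ := h _ hle c
  exact hi (hc i)

theorem chiMu_hypercube_unbounded_general (q : ℕ) :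
    ∃ n₀ : ℕ, ∀ n : ℕ, n₀ ≤ n → q < chiMu n := by
  let N k := levelRamseyBound k (2 * k + 1) (2 * k)
  refine ⟨(range (q + 1)).sup N, fun n hn => lt_chiMu fun k hk c =>
    exists_colorClass_not_isMutualVisibilitySet c ?_⟩
  exact (le_sup (f := N) (mem_range.2 (Nat.lt_succ_of_le hk))).trans hn

/-- The chromatic mutual-visibility number of hypercubes tends to infinity:
for every positive integer `q` there is `n₀` such that `χ_μ(Q_n) > q` for all `n ≥ n₀`. -/
theorem chiMu_hypercube_unbounded (q : ℕ) (hq : 1 ≤ q) :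
    ∃ n₀ : ℕ, ∀ n : ℕ, n₀ ≤ n → q < chiMu n :=
  chiMu_hypercube_unbounded_general q
end

section
/- For every natural number n ≥ 1, the total mutual-visibility number of the n-dimensional hypercube satisfies μ_t(Q_n) ≤ 2^n / n. -/
open Finset SimpleGraph
open scoped symmDiff

theorem Finset.singleton_symmDiff_singleton {α : Type*} [DecidableEq α] {i j : α} (hij : i ≠ j) :
    ({i} ∆ {j} : Finset α) = {i, j} := by
  ext x
  simp only [mem_symmDiff, mem_singleton, mem_insert]
  grind

theorem ncard_mul_card_le_of_card_symmDiff_ne_two {α : Type*} [Fintype α] [DecidableEq α]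
    {M : Set (Finset α)} (hM : ∀ A ∈ M, ∀ B ∈ M, #(A ∆ B) ≠ 2) :
    M.ncard * Fintype.card α ≤ 2 ^ Fintype.card α := by
  have hinj : Set.InjOn (fun p : Finset α × α ↦ p.1 ∆ {p.2}) (M ×ˢ Set.univ) := by
    rintro ⟨A, i⟩ ⟨hA, -⟩ ⟨B, j⟩ ⟨hB, -⟩ (h : A ∆ {i} = B ∆ {j})
    have hAB : A ∆ B = {i} ∆ {j} := by
      ext x
      have hx := congrArg (x ∈ ·) h
      simp only [mem_symmDiff, eq_iff_iff] at hx ⊢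
      tauto
    by_cases hij : i = j
    · subst hij
      rw [symmDiff_self, symmDiff_eq_bot] at hAB
      rw [hAB]
    · refine absurd ?_ (hM A hA B hB)
      rw [hAB, singleton_symmDiff_singleton hij, card_pair hij]
  calc M.ncard * Fintype.card α = (M ×ˢ (Set.univ : Set α)).ncard := by
        simp [Set.ncard_prod, Nat.card_eq_fintype_card]
    _ ≤ (Set.univ : Set (Finset α)).ncard :=
        Set.ncard_le_ncard_of_injOn _ (fun _ _ ↦ Set.mem_univ _) hinj
    _ = 2 ^ Fintype.card α := by simp [Nat.card_eq_fintype_card]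

theorem IsVisiblePair.exists_notMem_adj_adj {V : Type*} {G : SimpleGraph V} {M : Set V}
    {u v : V} (h : IsVisiblePair G M u v) (huv : G.dist u v = 2) :
    ∃ w ∉ M, G.Adj u w ∧ G.Adj w v := by
  obtain ⟨p, -, hlen, hM⟩ := h
  have hu : G.Adj u (p.getVert 1) := by
    simpa using p.adj_getVert_succ (i := 0) (by omega)
  have hv : G.Adj (p.getVert 1) v := by
    have hlen2 : p.length = 2 := hlen.trans huv
    simpa [← hlen2] using p.adj_getVert_succ (i := 1) (by omega)
  refine ⟨p.getVert 1, fun hw ↦ ?_, hu, hv⟩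
  rcases hM _ (p.getVert_mem_support 1) hw with h | h
  · exact hu.ne h.symm
  · exact hv.ne h

section Hypercube

variable {n : ℕ}

theorem hypercube_adj_iff {A B : Finset (Fin n)} :
    (hypercube n).Adj A B ↔ ∃ i, B = A ∆ {i} := by
  refine (card_eq_one (s := A ∆ B)).trans (exists_congr fun i ↦ ⟨fun h ↦ ?_, fun h ↦ ?_⟩)
  · rw [← h, symmDiff_symmDiff_cancel_left]
  · rw [h, symmDiff_symmDiff_cancel_left]

theorem hypercube_adj_symmDiff_singleton (A : Finset (Fin n)) (i : Fin n) :
    (hypercube n).Adj A (A ∆ {i}) :=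
  hypercube_adj_iff.2 ⟨i, rfl⟩

theorem hypercube_dist_symmDiff_pair (u : Finset (Fin n)) {i j : Fin n} (hij : i ≠ j) :
    (hypercube n).dist u (u ∆ {i, j}) = 2 := by
  have hcard : #(u ∆ (u ∆ {i, j})) = 2 := by
    rw [symmDiff_symmDiff_cancel_left, card_pair hij]
  let p : (hypercube n).Walk u (u ∆ {i, j}) :=
    (Walk.cons (hypercube_adj_symmDiff_singleton u i)
      (.cons (hypercube_adj_symmDiff_singleton _ j) .nil)).copy rfl
      (by rw [symmDiff_assoc, singleton_symmDiff_singleton hij])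
  refine le_antisymm (by simpa [p] using dist_le p) ?_
  refine p.reachable.one_lt_dist_of_ne_of_not_adj (fun h ↦ ?_) fun h ↦ ?_
  · rw [← h, symmDiff_self] at hcard
    simp at hcard
  · have : #(u ∆ (u ∆ {i, j})) = 1 := h
    omega

theorem hypercube_eq_of_adj_of_adj_symmDiff_pair {u w : Finset (Fin n)} {i j : Fin n}
    (hij : i ≠ j) (huw : (hypercube n).Adj u w) (hwv : (hypercube n).Adj w (u ∆ {i, j})) :
    w = u ∆ {i} ∨ w = u ∆ {j} := by
  obtain ⟨a, rfl⟩ := hypercube_adj_iff.1 huw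
  obtain ⟨b, hb⟩ := hypercube_adj_iff.1 hwv
  have hab : ({a} ∆ {b} : Finset (Fin n)) = {i, j} := by
    rwa [symmDiff_assoc, symmDiff_right_inj, eq_comm] at hb
  have ha : a ∈ ({i, j} : Finset (Fin n)) := by
    rw [← hab, mem_symmDiff, mem_singleton, mem_singleton]
    refine .inl ⟨rfl, fun hab' ↦ ?_⟩
    rw [hab', symmDiff_self] at hab
    simpa using congrArg (i ∈ ·) hab
  rcases mem_insert.1 ha with rfl | ha
  · exact .inl rfl
  · exact .inr (by rw [mem_singleton.1 ha])

theorem IsTotalMutualVisibilitySet.card_symmDiff_ne_two {M : Set (Finset (Fin n))}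
    (hM : IsTotalMutualVisibilitySet (hypercube n) M) {A B : Finset (Fin n)}
    (hA : A ∈ M) (hB : B ∈ M) : #(A ∆ B) ≠ 2 := by
  intro hAB
  obtain ⟨i, j, hij, hAB⟩ := card_eq_two.1 hAB
  -- `u` and `u ∆ {i, j} = A ∆ {j}` are at distance 2, and their only common neighbours are `A`, `B`
  set u := A ∆ {i}
  obtain ⟨w, hwM, huw, hwv⟩ :=
    (hM u (u ∆ {i, j})).exists_notMem_adj_adj (hypercube_dist_symmDiff_pair u hij)
  rcases hypercube_eq_of_adj_of_adj_symmDiff_pair hij huw hwv with rfl | rfl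
  · exact hwM (by rwa [symmDiff_symmDiff_cancel_right])
  · refine hwM ?_
    rwa [symmDiff_assoc, singleton_symmDiff_singleton hij, ← hAB, symmDiff_symmDiff_cancel_left]

end Hypercube

/-- For every `n ≥ 1`, `μ_t(Q_n) ≤ 2^n / n`. -/
theorem muTotal_hypercube_upper (n : ℕ) (hn : 1 ≤ n) :
    (muTotal n : ℝ) ≤ 2 ^ n / n := by
  have hbound : muTotal n ≤ 2 ^ n / n := by
    refine csSup_le' ?_
    rintro _ ⟨M, hM, rfl⟩
    rw [Nat.le_div_iff_mul_le hn]
    simpa using ncard_mul_card_le_of_card_symmDiff_ne_two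
      fun A hA B hB ↦ hM.card_symmDiff_ne_two hA hB
  rw [le_div_iff₀ (by positivity)]
  exact_mod_cast (Nat.le_div_iff_mul_le hn).1 hbound
end

section
/- If n = 2^m − 1 for some positive integer m, then the total mutual-visibility number of the n-dimensional hypercube satisfies μ_t(Q_n) ≥ 2^n / (n+1). -/
open Finset SimpleGraph Function
open scoped symmDiff

section Code

variable {α ι G : Type*} [DecidableEq α] [DecidableEq ι] [AddCommGroup G] [Module (ZMod 2) G]

lemma exists_flip_toward_of_pairwise {M : Set (Finset α)}
    (hM : M.Pairwise (fun a b => 3 ≤ #(a ∆ b))) {u v : Finset α}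
    (huv : u ≠ v) : ∃ i ∈ u ∆ v, u ∆ {i} ∈ M → u ∆ {i} = v := by
  obtain ⟨i, hi⟩ := nonempty_iff_ne_empty.2 fun h => huv (symmDiff_eq_bot.1 h)
  obtain hcard | hcard := (one_le_card.2 ⟨i, hi⟩).eq_or_lt
  · obtain ⟨j, hj⟩ := card_eq_one.1 hcard.symm
    refine ⟨j, hj ▸ mem_singleton_self j, fun _ => ?_⟩
    rw [← hj, symmDiff_symmDiff_cancel_left]
  obtain ⟨i, hi, j, hj, hij⟩ := one_lt_card.1 hcard
  by_cases hiM : u ∆ {i} ∈ M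
  · have hne : u ∆ {i} ≠ u ∆ {j} := fun h =>
      hij (singleton_injective (symmDiff_right_injective u h))
    have hclose : #((u ∆ {i}) ∆ (u ∆ {j})) < 3 := by
      rw [symmDiff_symmDiff_symmDiff_comm, symmDiff_self, bot_symmDiff]
      exact Nat.lt_succ_of_le ((card_le_card symmDiff_le_sup).trans (card_union_le _ _))
    exact ⟨j, hj, fun hjM => absurd (hM hiM hjM hne) (not_le.2 hclose)⟩
  · exact ⟨i, hi, fun h => absurd h hiM⟩

def syndrome (f : ι → G) (S : Finset ι) : G := ∑ i ∈ S, f i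

lemma syndrome_symmDiff (f : ι → G) (a b : Finset ι) :
    syndrome f (a ∆ b) = syndrome f a + syndrome f b := by
  have hdisj : Disjoint (a ∆ b) (a ∩ b) := disjoint_symmDiff_inf a b
  have hunion : a ∆ b ∪ a ∩ b = a ∪ b := symmDiff_sup_inf a b
  calc syndrome f (a ∆ b)
      = syndrome f (a ∆ b) + (syndrome f (a ∩ b) + syndrome f (a ∩ b)) := by
        rw [ZModModule.add_self, add_zero]
    _ = syndrome f (a ∪ b) + syndrome f (a ∩ b) := by
        simp only [syndrome]
        rw [← add_assoc, ← sum_union hdisj, hunion]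
    _ = syndrome f a + syndrome f b := sum_union_inter

lemma three_le_card_symmDiff_of_syndrome_eq {f : ι → G} (hf : Injective f) (hf0 : ∀ i, f i ≠ 0)
    {a b : Finset ι} (hab : a ≠ b) (h : syndrome f a = syndrome f b) : 3 ≤ #(a ∆ b) := by
  have h0 : syndrome f (a ∆ b) = 0 := by rw [syndrome_symmDiff, h, ZModModule.add_self]
  by_contra! hlt
  interval_cases hcard : #(a ∆ b)
  · exact hab (symmDiff_eq_bot.1 (card_eq_zero.1 hcard))
  · obtain ⟨i, hi⟩ := card_eq_one.1 hcard
    rw [hi, syndrome, sum_singleton] at h0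
    exact hf0 i h0
  · obtain ⟨i, j, hij, hi⟩ := card_eq_two.1 hcard
    rw [hi, syndrome, sum_pair hij, add_eq_zero_iff_eq_neg, ZModModule.neg_eq_self] at h0
    exact hij (hf h0)

theorem exists_pairwise_three_le_card_symmDiff [Fintype ι] [Fintype G] {f : ι → G}
    (hf : Injective f) (hf0 : ∀ i, f i ≠ 0) :
    ∃ C : Finset (Finset ι), (C : Set (Finset ι)).Pairwise (fun a b => 3 ≤ #(a ∆ b)) ∧
      (2 : ℝ) ^ Fintype.card ι / Fintype.card G ≤ #C := by
  classical
  obtain ⟨x, hx⟩ := Fintype.exists_le_card_fiber_of_nsmul_le_card (syndrome f)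
    (b := (2 : ℝ) ^ Fintype.card ι / Fintype.card G) (by
      rw [nsmul_eq_mul, mul_div_cancel₀ _ (by positivity), Fintype.card_finset]; norm_num)
  refine ⟨({S | syndrome f S = x} : Finset (Finset ι)), fun a ha b hb hab => ?_, hx⟩
  rw [mem_coe, mem_filter_univ] at ha hb
  exact three_le_card_symmDiff_of_syndrome_eq hf hf0 hab (ha.trans hb.symm)

end Code

namespace hypercube

variable {n : ℕ}

lemma adj_symmDiff_singleton (u : Finset (Fin n)) (i : Fin n) :
    (hypercube n).Adj u (u ∆ {i}) := by
  change #(u ∆ (u ∆ {i})) = 1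
  rw [symmDiff_symmDiff_cancel_left, card_singleton]

lemma card_symmDiff_le_length {u v : Finset (Fin n)} (p : (hypercube n).Walk u v) :
    #(u ∆ v) ≤ p.length := by
  induction p with
  | nil => simp
  | @cons u w v hadj p ih =>
    have huw : #(u ∆ w) = 1 := hadj
    calc #(u ∆ v) ≤ #(u ∆ w) + #(w ∆ v) :=
          (card_le_card (symmDiff_triangle u w v)).trans (card_union_le _ _)
      _ ≤ (Walk.cons _ p).length := by rw [Walk.length_cons]; omega

lemma exists_walk_length_eq_card_symmDiff {M : Set (Finset (Fin n))}
    (hM : M.Pairwise (fun a b => 3 ≤ #(a ∆ b))) (u v : Finset (Fin n)) :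
    ∃ p : (hypercube n).Walk u v, p.length = #(u ∆ v) ∧
      ∀ x ∈ p.support, x ∈ M → x = u ∨ x = v := by
  induction hd : #(u ∆ v) generalizing u with
  | zero =>
    obtain rfl : u = v := symmDiff_eq_bot.1 (card_eq_zero.1 hd)
    exact ⟨.nil, rfl, by simp⟩
  | succ d ih =>
    have huv : u ≠ v := by rintro rfl; simp at hd
    obtain ⟨i, hi, hiM⟩ := exists_flip_toward_of_pairwise hM huv
    have hd' : #((u ∆ {i}) ∆ v) = d := by
      rw [symmDiff_right_comm, symmDiff_of_ge (singleton_subset_iff.2 hi),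
        sdiff_singleton_eq_erase, card_erase_of_mem hi, hd, Nat.add_sub_cancel]
    obtain ⟨p, hp, hpM⟩ := ih (u ∆ {i}) hd'
    refine ⟨.cons (adj_symmDiff_singleton u i) p, by rw [Walk.length_cons, hp], ?_⟩
    simp only [Walk.support_cons, List.mem_cons, forall_eq_or_imp, true_or, implies_true,
      true_and]
    intro x hx hxM
    rcases hpM x hx hxM with rfl | rfl
    · exact .inr (hiM hxM)
    · exact .inr rfl

lemma dist_eq_card_symmDiff (u v : Finset (Fin n)) :
    (hypercube n).dist u v = #(u ∆ v) := by
  obtain ⟨p, hp, -⟩ := exists_walk_length_eq_card_symmDiff (M := ∅) (by simp) u v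
  obtain ⟨q, hq⟩ := p.reachable.exists_walk_length_eq_dist
  exact le_antisymm (hp ▸ dist_le p) (hq ▸ card_symmDiff_le_length q)

theorem isTotalMutualVisibilitySet_of_pairwise {M : Set (Finset (Fin n))}
    (hM : M.Pairwise (fun a b => 3 ≤ #(a ∆ b))) : IsTotalMutualVisibilitySet (hypercube n) M := by
  intro u v
  obtain ⟨p, hp, hpM⟩ := exists_walk_length_eq_card_symmDiff hM u v
  have hd : p.length = (hypercube n).dist u v := hp.trans (dist_eq_card_symmDiff u v).symm
  exact ⟨p, p.isPath_of_length_eq_dist hd, hd, hpM⟩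

end hypercube

lemma ncard_le_muTotal {n : ℕ} {M : Set (Finset (Fin n))}
    (hM : IsTotalMutualVisibilitySet (hypercube n) M) : M.ncard ≤ muTotal n :=
  le_csSup ⟨Nat.card (Finset (Fin n)), by rintro _ ⟨M, -, rfl⟩; exact Set.ncard_le_card M⟩
    ⟨M, hM, rfl⟩

theorem muTotal_hypercube_lower_hamming_general (m n : ℕ) (hn : n = 2 ^ m - 1) :
    (2 : ℝ) ^ n / (n + 1) ≤ (muTotal n : ℝ) := by
  classical
  have hcard : Fintype.card (Fin m → ZMod 2) = n + 1 := by
    simp [hn, Nat.sub_add_cancel Nat.one_le_two_pow]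
  obtain ⟨f⟩ : Nonempty (Fin n ↪ {x : Fin m → ZMod 2 // x ≠ 0}) :=
    Function.Embedding.nonempty_of_card_le (by simp [hcard])
  obtain ⟨C, hC, hCcard⟩ := exists_pairwise_three_le_card_symmDiff
    (Subtype.val_injective.comp f.injective) (fun i => (f i).2)
  calc (2 : ℝ) ^ n / (n + 1) ≤ #C := by simpa [hcard] using hCcard
    _ ≤ muTotal n := by
      have h := ncard_le_muTotal (hypercube.isTotalMutualVisibilitySet_of_pairwise hC)
      rw [Set.ncard_coe_finset] at h
      exact_mod_cast h

/-- If `n = 2^m − 1` for a positive integer `m`, then `μ_t(Q_n) ≥ 2^n / (n+1)`. -/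
theorem muTotal_hypercube_lower_hamming (m n : ℕ) (hm : 1 ≤ m) (hn : n = 2 ^ m - 1) :
    (2 : ℝ) ^ n / (n + 1) ≤ (muTotal n : ℝ) :=
  muTotal_hypercube_lower_hamming_general m n hn
end

section
/- Let n, d ∈ ℕ with n ≥ d ≥ 3. For each r with d ≤ r ≤ n−d let F_r be an arbitrary subfamily of the layer L_r of Q_n containing no (r,2d,d)-daisy, and for r ≤ d−1 or r ≥ n−d+1 let F_r = L_r. Then for every integer λ, the set M(λ) = ∪_{r ≡ λ (mod d)} F_r is a mutual-visibility set in Q_n. -/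
/-! For `u, v ∈ M(λ)` with `|u| ≤ |v|` we build a geodesic of `Q_n` from `u` to `v` whose
interior avoids `M(λ)`. Strictly between two levels `a ≡ λ` and `a + d` no vertex lies in `M(λ)`,
and since `d ≥ 3` this window contains two levels, so a greedy walk that adds elements of `v \ u`
and removes elements of `u \ v` can always stay inside it; this joins `u` to `v` when
`|v| ∈ {|u|, |u| + d}`. If `|v| ≥ |u| + 2d`, pick `S ⊆ v \ u` with `|S| = 2d`: as `F_{|u|+d}`
contains no daisy, some `T` with `u ⊆ T ⊆ u ∪ S` and `|T| = |u| + d` is not in `M(λ)`.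
The geodesic climbs from `u` to `T` inside the window and continues from `T` by induction. -/

open Finset SimpleGraph
open scoped symmDiff

namespace Hypercube

variable {n : ℕ}

lemma card_symmDiff_add_card_symmDiff {α : Type*} [DecidableEq α] {u m v : Finset α}
    (h₁ : u ∩ v ⊆ m) (h₂ : m ⊆ u ∪ v) : #(u ∆ m) + #(m ∆ v) = #(u ∆ v) := by
  have hdisj : Disjoint (u ∆ m) (m ∆ v) := by
    rw [Finset.disjoint_left]
    intro x hx hx'
    have := @h₁ x
    have := @h₂ x
    simp only [mem_symmDiff, mem_inter, mem_union] at *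
    tauto
  rw [← card_union_of_disjoint hdisj, ← sup_eq_union, ← hdisj.symmDiff_eq_sup, symmDiff_assoc,
    symmDiff_symmDiff_cancel_left]

lemma card_symmDiff_le_length {u v : Finset (Fin n)} (p : (hypercube n).Walk u v) :
    #(u ∆ v) ≤ p.length := by
  induction p with
  | nil => simp
  | @cons u w v h p ih =>
    have h₁ : #(u ∆ w) = 1 := h
    calc #(u ∆ v) ≤ #(u ∆ w ∪ w ∆ v) := card_le_card (symmDiff_triangle u w v)
      _ ≤ #(u ∆ w) + #(w ∆ v) := card_union_le _ _
      _ ≤ (Walk.cons h p).length := by rw [Walk.length_cons]; omega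

lemma adj_insert {u : Finset (Fin n)} {x : Fin n} (hx : x ∉ u) :
    (hypercube n).Adj u (insert x u) := by
  show #(u ∆ insert x u) = 1
  rw [card_eq_one]
  refine ⟨x, ?_⟩
  ext y
  by_cases hy : y = x
  · subst hy; simp [mem_symmDiff, hx]
  · simp [mem_symmDiff, hy]

lemma adj_erase {u : Finset (Fin n)} {x : Fin n} (hx : x ∈ u) :
    (hypercube n).Adj u (u.erase x) := by
  simpa [insert_erase hx] using (adj_insert (notMem_erase x u)).symm

/-- In `Q_n` a walk from `u` to `v` of length `#(u ∆ v)` is a geodesic. -/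
def GeodesicThrough (P : Finset (Fin n) → Prop) (u v : Finset (Fin n)) : Prop :=
  ∃ p : (hypercube n).Walk u v, p.length = #(u ∆ v) ∧ ∀ x ∈ p.support, x = u ∨ x = v ∨ P x

namespace GeodesicThrough

variable {P Q : Finset (Fin n) → Prop} {u m v : Finset (Fin n)}

lemma refl (P : Finset (Fin n) → Prop) (u : Finset (Fin n)) : GeodesicThrough P u u :=
  ⟨Walk.nil, by simp, by simp⟩

lemma of_adj (h : (hypercube n).Adj u v) : GeodesicThrough P u v :=
  ⟨h.toWalk, by rw [show #(u ∆ v) = 1 from h]; rfl, by simp⟩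

lemma symm (h : GeodesicThrough P u v) : GeodesicThrough P v u := by
  obtain ⟨p, hlen, hint⟩ := h
  refine ⟨p.reverse, by rw [Walk.length_reverse, hlen, symmDiff_comm], fun x hx => ?_⟩
  rw [Walk.support_reverse, List.mem_reverse] at hx
  rcases hint x hx with h | h | h <;> simp [h]

lemma mono (h : GeodesicThrough P u v) (hPQ : ∀ x, P x → Q x) : GeodesicThrough Q u v := by
  obtain ⟨p, hlen, hint⟩ := h
  exact ⟨p, hlen, fun x hx => (hint x hx).imp_right (Or.imp_right (hPQ x))⟩

lemma trans (h₁ : GeodesicThrough P u m) (h₂ : GeodesicThrough P m v) (hum : u ∩ v ⊆ m)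
    (hmv : m ⊆ u ∪ v) (hm : P m) : GeodesicThrough P u v := by
  obtain ⟨p, hp, hpint⟩ := h₁
  obtain ⟨q, hq, hqint⟩ := h₂
  refine ⟨p.append q, ?_, fun x hx => ?_⟩
  · rw [Walk.length_append, hp, hq, card_symmDiff_add_card_symmDiff hum hmv]
  · rcases (Walk.mem_support_append_iff p q).1 hx with hx | hx
    · rcases hpint x hx with rfl | rfl | h <;> simp [*]
    · rcases hqint x hx with rfl | rfl | h <;> simp [*]

lemma isVisiblePair {M : Set (Finset (Fin n))} (h : GeodesicThrough (· ∉ M) u v) :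
    IsVisiblePair (hypercube n) M u v := by
  obtain ⟨p, hlen, hint⟩ := h
  have hdist : p.length = (hypercube n).dist u v := by
    obtain ⟨q, hq⟩ := (p.reachable).exists_walk_length_eq_dist
    have := card_symmDiff_le_length q
    have := dist_le p
    omega
  refine ⟨p, p.isPath_of_length_eq_dist hdist, hdist, fun x hx hxM => ?_⟩
  rcases hint x hx with h | h | h
  exacts [Or.inl h, Or.inr h, absurd hxM h]

end GeodesicThrough

lemma exists_adj_between_of_lt_of_lt {a d : ℕ} (hd : 3 ≤ d) {w v : Finset (Fin n)}
    (hw : a ≤ #w) (hw' : #w ≤ a + d) (hv : a ≤ #v) (hv' : #v ≤ a + d) (hwv : 2 ≤ #(w ∆ v)) :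
    ∃ w', (hypercube n).Adj w w' ∧ w ∩ v ⊆ w' ∧ w' ⊆ w ∪ v ∧ a < #w' ∧ #w' < a + d := by
  have hsymm : #(w ∆ v) = #(w \ v) + #(v \ w) := by
    rw [symmDiff_def, sup_eq_union, card_union_of_disjoint disjoint_sdiff_sdiff]
  have hcard : #w + #(v \ w) = #v + #(w \ v) := by
    have := card_sdiff_add_card_inter w v
    have := card_sdiff_add_card_inter v w
    rw [inter_comm] at this
    omega
  by_cases hup : (v \ w).Nonempty ∧ #w + 1 < a + d
  · obtain ⟨x, hx⟩ := hup.1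
    rw [mem_sdiff] at hx
    refine ⟨insert x w, adj_insert hx.2, inter_subset_left.trans (subset_insert x w),
      insert_subset (mem_union_right w hx.1) subset_union_left, ?_, ?_⟩ <;>
      rw [card_insert_of_notMem hx.2] <;> omega
  by_cases hdown : (w \ v).Nonempty ∧ a + 1 < #w
  · obtain ⟨x, hx⟩ := hdown.1
    rw [mem_sdiff] at hx
    refine ⟨w.erase x, adj_erase hx.1, fun y hy => ?_, (erase_subset x w).trans subset_union_left,
      ?_, ?_⟩
    · rw [mem_inter] at hy
      exact mem_erase.2 ⟨fun h => hx.2 (h ▸ hy.2), hy.1⟩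
    all_goals rw [card_erase_of_mem hx.1]; omega
  simp only [← card_pos] at hup hdown
  omega

theorem geodesicThrough_window {a d : ℕ} (hd : 3 ≤ d) {w v : Finset (Fin n)}
    (hw : a ≤ #w) (hw' : #w ≤ a + d) (hv : a ≤ #v) (hv' : #v ≤ a + d) :
    GeodesicThrough (fun x => a < #x ∧ #x < a + d) w v := by
  induction hk : #(w ∆ v) using Nat.strong_induction_on generalizing w with
  | _ k ih =>
  rcases lt_trichotomy k 1 with hk0 | rfl | hk2
  · obtain rfl : w = v := by
      rwa [Nat.lt_one_iff, ← hk, card_eq_zero, ← bot_eq_empty, symmDiff_eq_bot] at hk0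
    exact GeodesicThrough.refl _ w
  · exact GeodesicThrough.of_adj hk
  · obtain ⟨w', hadj, h₁, h₂, hlo, hhi⟩ :=
      exists_adj_between_of_lt_of_lt hd hw hw' hv hv' (by omega)
    have hcloser : #(w' ∆ v) < k := by
      have := card_symmDiff_add_card_symmDiff h₁ h₂
      have : #(w ∆ w') = 1 := hadj
      omega
    exact (GeodesicThrough.of_adj hadj).trans (ih _ hcloser hlo.le hhi.le rfl) h₁ h₂ ⟨hlo, hhi⟩

lemma not_modEq_of_lt_of_lt {d a b : ℕ} {lam : ℤ} (ha : (a : ℤ) ≡ lam [ZMOD d]) (hab : a < b)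
    (hb : b < a + d) : ¬ (b : ℤ) ≡ lam [ZMOD d] := fun hb' => by
  have := Int.le_of_dvd (by omega) (ha.trans hb'.symm).dvd
  omega

lemma natCast_add_modEq {d a : ℕ} {lam : ℤ} (ha : (a : ℤ) ≡ lam [ZMOD d]) :
    ((a + d : ℕ) : ℤ) ≡ lam [ZMOD d] := by
  push_cast
  exact Int.add_modEq_right.trans ha

theorem geodesicThrough_of_modEq {d : ℕ} {lam : ℤ} {M : Set (Finset (Fin n))} (hd : 3 ≤ d)
    (hM : ∀ x ∈ M, (#x : ℤ) ≡ lam [ZMOD d])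
    (hescape : ∀ u B : Finset (Fin n), u ⊆ B → #B = #u + 2 * d →
      ∃ T, u ⊆ T ∧ T ⊆ B ∧ #T = #u + d ∧ T ∉ M)
    {u v : Finset (Fin n)} (hu : (#u : ℤ) ≡ lam [ZMOD d]) (hv : (#v : ℤ) ≡ lam [ZMOD d])
    (huv : #u ≤ #v) : GeodesicThrough (· ∉ M) u v := by
  induction hk : #v - #u using Nat.strong_induction_on generalizing u with
  | _ k ih =>
  have hwindow : ∀ x : Finset (Fin n), #u < #x ∧ #x < #u + d → x ∉ M :=
    fun x hx hxM => not_modEq_of_lt_of_lt hu hx.1 hx.2 (hM x hxM)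
  by_cases hnear : #v < #u + 2 * d
  · have hv' : #v ≤ #u + d := by
      by_contra! h
      exact not_modEq_of_lt_of_lt (natCast_add_modEq hu) h (by omega) hv
    exact (geodesicThrough_window hd le_rfl (by omega) huv hv').mono hwindow
  obtain ⟨S, hS, hScard⟩ : ∃ S ⊆ v \ u, #S = 2 * d := by
    apply exists_subset_card_eq
    have := card_le_card_sdiff_add_card (s := v) (t := u)
    omega
  obtain ⟨T, huT, hTB, hTcard, hTM⟩ := hescape u (u ∪ S) subset_union_left
    (by rw [card_union_of_disjoint (disjoint_of_subset_right hS disjoint_sdiff), hScard])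
  have hTv : T ⊆ u ∪ v := hTB.trans (union_subset_union_right (hS.trans sdiff_subset))
  have huT' : GeodesicThrough (· ∉ M) u T :=
    (geodesicThrough_window hd le_rfl (by omega) (card_le_card huT) hTcard.le).mono hwindow
  have hTv' : GeodesicThrough (· ∉ M) T v :=
    ih _ (by omega) (hTcard ▸ natCast_add_modEq hu) (by omega) rfl
  exact huT'.trans hTv' (inter_subset_left.trans huT) hTv hTM

lemma isMutualVisibilitySet_of_geodesicThrough {M : Set (Finset (Fin n))}
    (h : ∀ u ∈ M, ∀ v ∈ M, #u ≤ #v → GeodesicThrough (· ∉ M) u v) :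
    IsMutualVisibilitySet (hypercube n) M := by
  intro u hu v hv
  rcases le_total #u #v with huv | hvu
  · exact (h u hu v hv huv).isVisiblePair
  · exact (h v hv u hu hvu).symm.isVisiblePair

end Hypercube

open Hypercube

section ResidueUnion

variable {n d : ℕ} {F : ℕ → Finset (Finset (Fin n))} {lam : ℤ}

/-- The set `M(λ)` of the construction. -/
def residueUnion (F : ℕ → Finset (Finset (Fin n))) (d : ℕ) (lam : ℤ) : Set (Finset (Fin n)) :=
  {A | ∃ r : ℕ, r ≤ n ∧ (r : ℤ) % d = lam % d ∧ A ∈ F r}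

lemma mem_residueUnion_iff (hcard : ∀ r ≤ n, ∀ A ∈ F r, #A = r) {A : Finset (Fin n)} :
    A ∈ residueUnion F d lam ↔ (#A : ℤ) ≡ lam [ZMOD d] ∧ A ∈ F #A := by
  constructor
  · rintro ⟨r, hr, hrlam, hA⟩
    obtain rfl := hcard r hr A hA
    exact ⟨hrlam, hA⟩
  · rintro ⟨hAlam, hA⟩
    exact ⟨#A, card_finset_fin_le A, hAlam, hA⟩

lemma exists_notMem_residueUnion (hcard : ∀ r ≤ n, ∀ A ∈ F r, #A = r)
    (hfree : ∀ r, d ≤ r → r ≤ n - d → ¬ ContainsDaisy n r (2 * d) d (F r))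
    {u B : Finset (Fin n)} (huB : u ⊆ B) (hB : #B = #u + 2 * d) :
    ∃ T, u ⊆ T ∧ T ⊆ B ∧ #T = #u + d ∧ T ∉ residueUnion F d lam := by
  have hBn := card_finset_fin_le B
  by_contra! hall
  refine hfree (#u + d) (by omega) (by omega)
    ⟨u, B, huB, by omega, by omega, fun T huT hTB hT => ?_⟩
  have := ((mem_residueUnion_iff hcard).1 (hall T huT hTB hT)).2
  rwa [hT] at this

end ResidueUnion

theorem construction_isMutualVisibilitySet_general (n d : ℕ) (hd : 3 ≤ d)
    (F : ℕ → Finset (Finset (Fin n)))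
    (hfree : ∀ r : ℕ, d ≤ r → r ≤ n - d →
      (∀ T ∈ F r, T.card = r) ∧ ¬ ContainsDaisy n r (2 * d) d (F r))
    (hfull : ∀ r : ℕ, r ≤ n → (r < d ∨ n - d < r) →
      F r = Finset.univ.filter (fun A : Finset (Fin n) => A.card = r))
    (lam : ℤ) :
    IsMutualVisibilitySet (hypercube n)
      {A : Finset (Fin n) | ∃ r : ℕ, r ≤ n ∧ (r : ℤ) % d = lam % d ∧ A ∈ F r} := by
  have hcard : ∀ r ≤ n, ∀ A ∈ F r, #A = r := by
    intro r hr A hA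
    by_cases hmid : d ≤ r ∧ r ≤ n - d
    · exact (hfree r hmid.1 hmid.2).1 A hA
    · rw [hfull r hr (by omega), mem_filter] at hA
      exact hA.2
  have hM := fun A (hA : A ∈ residueUnion F d lam) => ((mem_residueUnion_iff hcard).1 hA).1
  refine isMutualVisibilitySet_of_geodesicThrough fun u hu v hv huv =>
    geodesicThrough_of_modEq hd hM (fun u B huB hB => ?_) (hM u hu) (hM v hv) huv
  exact exists_notMem_residueUnion hcard (fun r h₁ h₂ => (hfree r h₁ h₂).2) huB hB

/-- **Key Lemma.** Let `n ≥ d ≥ 3`. Suppose `F r` is a `D_r(2d,d)`-free family of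
`r`-subsets of `[n]` for `d ≤ r ≤ n−d`, and `F r` is the full layer `L_r` for
`r ≤ d−1` or `r ≥ n−d+1`. Then for every integer `λ`, the union
`M(λ) = ∪_{r ≡ λ (mod d)} F r` is a mutual-visibility set in `Q_n`. -/
theorem construction_isMutualVisibilitySet (n d : ℕ) (hd : 3 ≤ d) (hn : d ≤ n)
    (F : ℕ → Finset (Finset (Fin n)))
    (hfree : ∀ r : ℕ, d ≤ r → r ≤ n - d →
      (∀ T ∈ F r, T.card = r) ∧ ¬ ContainsDaisy n r (2 * d) d (F r))
    (hfull : ∀ r : ℕ, r ≤ n → (r < d ∨ n - d < r) →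
      F r = Finset.univ.filter (fun A : Finset (Fin n) => A.card = r))
    (lam : ℤ) :
    IsMutualVisibilitySet (hypercube n)
      {A : Finset (Fin n) | ∃ r : ℕ, r ≤ n ∧ (r : ℤ) % d = lam % d ∧ A ∈ F r} :=
  construction_isMutualVisibilitySet_general n d hd F hfree hfull lam
end

section
/- Let r, s, t be positive integers with min{r,s} ≥ t. Then for all n ≥ r, ex(n+1, D_{r+1}(s,t)) / C(n+1,r+1) ≤ ex(n, D_r(s,t)) / C(n,r); equivalently, (r+1)·ex(n+1, D_{r+1}(s,t)) ≤ (n+1)·ex(n, D_r(s,t)). -/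
/-!
For a daisy-free family `F` of `(r+1)`-sets on `[n+1]` and a point `x`, the link
`{T \ {x} : x ∈ T ∈ F}` is a daisy-free family of `r`-sets on an `n`-set: a daisy `A ⊆ B` in the
link yields the daisy `A ∪ {x} ⊆ B ∪ {x}` in `F`. Double counting pairs `x ∈ T ∈ F` gives
`(r+1)|F| = Σₓ |link x| ≤ (n+1) ex(n, D_r(s,t))`, and the density form follows from
`(n+1) C(n,r) = (r+1) C(n+1,r+1)`.
-/

open Finset

lemma le_daisyTuran {n r s t : ℕ} {F : Finset (Finset (Fin n))}
    (hF : ∀ T ∈ F, #T = r) (hD : ¬ ContainsDaisy n r s t F) :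
    #F ≤ daisyTuran n r s t :=
  le_csSup ⟨Fintype.card (Finset (Fin n)), by rintro k ⟨F, -, -, rfl⟩; exact F.card_le_univ⟩
    ⟨F, hF, hD, rfl⟩

lemma mul_daisyTuran_le {n r s t c M : ℕ} (hc : 0 < c)
    (h : ∀ F : Finset (Finset (Fin n)), (∀ T ∈ F, #T = r) → ¬ ContainsDaisy n r s t F →
      c * #F ≤ M) :
    c * daisyTuran n r s t ≤ M := by
  rw [mul_comm, ← Nat.le_div_iff_mul_le hc]
  refine csSup_le' ?_
  rintro k ⟨F, hF, hD, rfl⟩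
  rw [Nat.le_div_iff_mul_le hc, mul_comm]
  exact h F hF hD

lemma sum_card_filter_mem_eq_sum_card {α : Type*} [Fintype α] [DecidableEq α]
    (F : Finset (Finset α)) : ∑ x, #{T ∈ F | x ∈ T} = ∑ T ∈ F, #T := by
  simpa [bipartiteAbove, bipartiteBelow] using
    (sum_card_bipartiteAbove_eq_sum_card_bipartiteBelow (s := F) (t := univ)
      (fun T x => x ∈ T)).symm

section Link

variable {n r s t : ℕ}

/-- `S ⊆ [n]` viewed as a subset of `[n+1] \ {x}`, together with `x`. -/
def insertSuccAbove (x : Fin (n + 1)) (S : Finset (Fin n)) : Finset (Fin (n + 1)) :=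
  insert x (S.map x.succAboveEmb)

lemma notMem_map_succAboveEmb (x : Fin (n + 1)) (S : Finset (Fin n)) :
    x ∉ S.map x.succAboveEmb := by
  simp [Fin.succAbove_ne]

lemma card_insertSuccAbove (x : Fin (n + 1)) (S : Finset (Fin n)) :
    #(insertSuccAbove x S) = #S + 1 := by
  rw [insertSuccAbove, card_insert_of_notMem (notMem_map_succAboveEmb x S), card_map]

lemma insertSuccAbove_subset_insertSuccAbove_iff {x : Fin (n + 1)} {S S' : Finset (Fin n)} :
    insertSuccAbove x S ⊆ insertSuccAbove x S' ↔ S ⊆ S' := by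
  rw [insertSuccAbove, insertSuccAbove, insert_subset_insert_iff (notMem_map_succAboveEmb x S),
    map_subset_map]

lemma insertSuccAbove_injective (x : Fin (n + 1)) : Function.Injective (insertSuccAbove x) :=
  fun _ _ h => (insertSuccAbove_subset_insertSuccAbove_iff.1 h.le).antisymm
    (insertSuccAbove_subset_insertSuccAbove_iff.1 h.ge)

lemma exists_insertSuccAbove_eq {x : Fin (n + 1)} {T : Finset (Fin (n + 1))} (hx : x ∈ T) :
    ∃ S, insertSuccAbove x S = T := by
  refine ⟨({i | x.succAbove i ∈ T} : Finset _), ?_⟩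
  ext y
  rcases x.eq_self_or_eq_succAbove y with rfl | ⟨i, rfl⟩ <;>
    simp [insertSuccAbove, hx, Fin.succAbove_ne]

def link (F : Finset (Finset (Fin (n + 1)))) (x : Fin (n + 1)) : Finset (Finset (Fin n)) :=
  {S | insertSuccAbove x S ∈ F}

variable {F : Finset (Finset (Fin (n + 1)))} {x : Fin (n + 1)}

lemma mem_link {S : Finset (Fin n)} : S ∈ link F x ↔ insertSuccAbove x S ∈ F := by
  simp [link]

lemma card_link : #(link F x) = #{T ∈ F | x ∈ T} := by
  refine card_nbij (insertSuccAbove x) (fun S hS => ?_) (insertSuccAbove_injective x).injOn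
    fun T hT => ?_
  · exact mem_filter.2 ⟨mem_link.1 hS, mem_insert_self x _⟩
  · obtain ⟨hTF, hxT⟩ := mem_filter.1 hT
    obtain ⟨S, rfl⟩ := exists_insertSuccAbove_eq hxT
    exact ⟨S, mem_link.2 hTF, rfl⟩

lemma card_of_mem_link (hF : ∀ T ∈ F, #T = r + 1) {S : Finset (Fin n)} (hS : S ∈ link F x) :
    #S = r := by
  simpa [card_insertSuccAbove] using hF _ (mem_link.1 hS)

lemma sum_card_link (hF : ∀ T ∈ F, #T = r + 1) : ∑ x, #(link F x) = (r + 1) * #F := by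
  simp_rw [card_link, sum_card_filter_mem_eq_sum_card, sum_congr rfl hF, sum_const, smul_eq_mul,
    mul_comm]

lemma not_containsDaisy_link (htr : t ≤ r) (hD : ¬ ContainsDaisy (n + 1) (r + 1) s t F) :
    ¬ ContainsDaisy n r s t (link F x) := by
  rintro ⟨A, B, hAB, hA, hB, hall⟩
  refine hD ⟨insertSuccAbove x A, insertSuccAbove x B,
    insertSuccAbove_subset_insertSuccAbove_iff.2 hAB, by rw [card_insertSuccAbove]; omega,
    by rw [card_insertSuccAbove]; omega, fun T hAT hTB hT => ?_⟩
  obtain ⟨S, rfl⟩ := exists_insertSuccAbove_eq (hAT (mem_insert_self x _))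
  rw [insertSuccAbove_subset_insertSuccAbove_iff] at hAT hTB
  rw [card_insertSuccAbove] at hT
  exact mem_link.1 (hall S hAT hTB (by omega))

lemma mul_card_le_of_not_containsDaisy (htr : t ≤ r) (hF : ∀ T ∈ F, #T = r + 1)
    (hD : ¬ ContainsDaisy (n + 1) (r + 1) s t F) :
    (r + 1) * #F ≤ (n + 1) * daisyTuran n r s t :=
  calc (r + 1) * #F = ∑ x, #(link F x) := (sum_card_link hF).symm
    _ ≤ ∑ _x : Fin (n + 1), daisyTuran n r s t :=
      sum_le_sum fun _ _ => le_daisyTuran (fun _ => card_of_mem_link hF)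
        (not_containsDaisy_link htr hD)
    _ = (n + 1) * daisyTuran n r s t := by simp

end Link

lemma mul_daisyTuran_succ_le {n r s t : ℕ} (htr : t ≤ r) :
    (r + 1) * daisyTuran (n + 1) (r + 1) s t ≤ (n + 1) * daisyTuran n r s t :=
  mul_daisyTuran_le r.succ_pos fun _ hF hD => mul_card_le_of_not_containsDaisy htr hF hD

lemma div_choose_succ_le_of_mul_le {a b n r : ℕ} (h : (r + 1) * a ≤ (n + 1) * b) :
    (a : ℝ) / (n + 1).choose (r + 1) ≤ b / n.choose r := by
  have hchoose : ((n + 1).choose (r + 1) : ℝ) * (r + 1) = (n + 1) * n.choose r := by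
    exact_mod_cast (Nat.add_one_mul_choose_eq n r).symm
  calc (a : ℝ) / (n + 1).choose (r + 1) = (r + 1) * a / ((n + 1) * n.choose r) := by
        rw [← hchoose, mul_comm _ ((r : ℝ) + 1), mul_div_mul_left _ _ (by positivity)]
    _ ≤ (n + 1) * b / ((n + 1) * n.choose r) :=
      div_le_div_of_nonneg_right (by exact_mod_cast h) (by positivity)
    _ = b / n.choose r := mul_div_mul_left _ _ (by positivity)

theorem daisyTuran_density_mono_r_general (r s t n : ℕ) (htr : t ≤ r) :
    (daisyTuran (n + 1) (r + 1) s t : ℝ) / (n + 1).choose (r + 1) ≤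
      (daisyTuran n r s t : ℝ) / n.choose r ∧
    (r + 1) * daisyTuran (n + 1) (r + 1) s t ≤ (n + 1) * daisyTuran n r s t := by
  have h := mul_daisyTuran_succ_le (n := n) (s := s) htr
  exact ⟨div_choose_succ_le_of_mul_le h, h⟩

/-- **Lemma (monotonicity in `r`).** For positive integers `r, s, t` with `min{r,s} ≥ t`
and `n ≥ r`, `ex(n+1, D_{r+1}(s,t))/C(n+1,r+1) ≤ ex(n, D_r(s,t))/C(n,r)`; equivalently,
`(r+1)·ex(n+1, D_{r+1}(s,t)) ≤ (n+1)·ex(n, D_r(s,t))`. -/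
theorem daisyTuran_density_mono_r (r s t n : ℕ) (ht : 1 ≤ t) (htr : t ≤ r) (hts : t ≤ s)
    (hn : r ≤ n) :
    (daisyTuran (n + 1) (r + 1) s t : ℝ) / (n + 1).choose (r + 1) ≤
      (daisyTuran n r s t : ℝ) / n.choose r ∧
    (r + 1) * daisyTuran (n + 1) (r + 1) s t ≤ (n + 1) * daisyTuran n r s t :=
  daisyTuran_density_mono_r_general r s t n htr
end

section
/- Let n ∈ ℕ with n ≥ 1 and let w ∈ {0,…,n}. Then there exists a set M of binary vectors in {0,1}^n, each of weight w, such that any two distinct elements of M have Hamming distance at least 4, and |M| ≥ C(n,w)/n. -/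
open Finset Function

namespace Finset

variable {α : Type*} [DecidableEq α]

theorem card_symmDiff (S T : Finset α) : #(symmDiff S T) = #(S \ T) + #(T \ S) := by
  rw [symmDiff_def, sup_eq_union, card_union_of_disjoint disjoint_sdiff_sdiff]

theorem four_le_card_symmDiff_of_sum_eq {G : Type*} [AddCancelCommMonoid G] {f : α → G}
    (hf : Injective f) {S T : Finset α} (hcard : #S = #T)
    (hsum : ∑ i ∈ S, f i = ∑ i ∈ T, f i) (hne : S ≠ T) : 4 ≤ #(symmDiff S T) := by
  have hsdiff : #(S \ T) = #(T \ S) := card_sdiff_comm hcard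
  rw [card_symmDiff, ← hsdiff]
  suffices 2 ≤ #(S \ T) by omega
  by_contra! hlt
  interval_cases h : #(S \ T)
  · rw [card_eq_zero, sdiff_eq_empty_iff_subset] at h
    exact hne (eq_of_subset_of_card_le h hcard.ge)
  · obtain ⟨i, hi⟩ := card_eq_one.mp h
    obtain ⟨j, hj⟩ := card_eq_one.mp (by omega : #(T \ S) = 1)
    -- Removing the common part `S ∩ T` from both sums leaves `f i = f j`.
    have hfij : f i = f j := by
      rw [← sum_sdiff (inter_subset_left : S ∩ T ⊆ S), ← sum_sdiff (inter_subset_right : S ∩ T ⊆ T),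
        sdiff_inter_self_left, sdiff_inter_self_right, hi, hj, sum_singleton, sum_singleton] at hsum
      exact add_right_cancel hsum
    have hiS : i ∈ S \ T := hi ▸ mem_singleton_self i
    have hjT : j ∈ T \ S := hj ▸ mem_singleton_self j
    exact (mem_sdiff.mp hjT).2 (hf hfij ▸ (mem_sdiff.mp hiS).1)

theorem exists_subset_powersetCard_four_le_card_symmDiff [Fintype α] {G : Type*} [AddCommGroup G]
    [Fintype G] [DecidableEq G] {f : α → G} (hf : Injective f) (k : ℕ) :
    ∃ C ⊆ powersetCard k (univ : Finset α), (∀ S ∈ C, ∀ T ∈ C, S ≠ T → 4 ≤ #(symmDiff S T)) ∧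
      ((Fintype.card α).choose k : ℝ) / Fintype.card G ≤ #C := by
  have hG : (0 : ℝ) < Fintype.card G := by exact_mod_cast Fintype.card_pos
  obtain ⟨g, -, hg⟩ := exists_le_card_fiber_of_nsmul_le_card_of_maps_to
    (s := powersetCard k univ) (f := fun S => ∑ i ∈ S, f i) (fun _ _ => mem_univ _) univ_nonempty
    (b := ((Fintype.card α).choose k : ℝ) / Fintype.card G)
    (by rw [card_univ, nsmul_eq_mul, mul_div_cancel₀ _ hG.ne', card_powersetCard, card_univ])
  refine ⟨_, filter_subset _ _, fun S hS T hT hne => ?_, hg⟩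
  rw [mem_filter, mem_powersetCard] at hS hT
  exact four_le_card_symmDiff_of_sum_eq hf (hS.1.2.trans hT.1.2.symm) (hS.2.trans hT.2.symm) hne

end Finset

theorem hammingDist_decide_mem {ι : Type*} [Fintype ι] [DecidableEq ι] (S T : Finset ι) :
    hammingDist (fun i => decide (i ∈ S)) (fun i => decide (i ∈ T)) = #(symmDiff S T) := by
  unfold hammingDist
  congr 1
  ext i
  simp only [ne_eq, decide_eq_decide, mem_filter, mem_univ, true_and, mem_symmDiff]
  tauto

theorem exists_constant_weight_code_general (n w : ℕ) (hn : 1 ≤ n) :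
    ∃ M : Finset (Fin n → Bool),
      (∀ x ∈ M, (Finset.univ.filter (fun i => x i = true)).card = w) ∧
      (∀ x ∈ M, ∀ y ∈ M, x ≠ y → 4 ≤ hammingDist x y) ∧
      (n.choose w : ℝ) / n ≤ (M.card : ℝ) := by
  have : NeZero n := ⟨by omega⟩
  obtain ⟨C, hCw, hCdist, hCcard⟩ :=
    exists_subset_powersetCard_four_le_card_symmDiff (ZMod.finEquiv n).injective w
  have hind : Injective fun (S : Finset (Fin n)) (i : Fin n) => decide (i ∈ S) :=
    fun S T h => by ext i; simpa using congrFun h i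
  refine ⟨C.map ⟨_, hind⟩, ?_, ?_, ?_⟩
  · simp only [mem_map, Embedding.coeFn_mk, forall_exists_index, and_imp, forall_apply_eq_imp_iff₂]
    intro S hS
    simpa using (mem_powersetCard.mp (hCw hS)).2
  · simp only [mem_map, Embedding.coeFn_mk, forall_exists_index, and_imp, forall_apply_eq_imp_iff₂]
    intro S hS T hT hne
    rw [hammingDist_decide_mem]
    exact hCdist S hS T hT (fun h => hne (h ▸ rfl))
  · simpa [card_map, ZMod.card] using hCcard

/-- **Graham–Sloane.** For `n ≥ 1` and `0 ≤ w ≤ n`, there is a set `M ⊆ {0,1}^n` of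
vectors of weight `w` with pairwise Hamming distance at least `4` and `|M| ≥ C(n,w)/n`. -/
theorem exists_constant_weight_code (n w : ℕ) (hn : 1 ≤ n) (hw : w ≤ n) :
    ∃ M : Finset (Fin n → Bool),
      (∀ x ∈ M, (Finset.univ.filter (fun i => x i = true)).card = w) ∧
      (∀ x ∈ M, ∀ y ∈ M, x ≠ y → 4 ≤ hammingDist x y) ∧
      (n.choose w : ℝ) / n ≤ (M.card : ℝ) :=
  exists_constant_weight_code_general n w hn
end

section
/- Let n ∈ ℕ with n ≥ 1 and let M ⊆ {0,1}^n be a set such that no two elements of M have Hamming distance exactly 2. Then |M| ≤ 2^n / n. -/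
/-! Flipping one coordinate sends `(x, i) ∈ M × [n]` to a neighbour of `x` in the cube. Two
distinct pairs can only reach the same point if their base points are at Hamming distance `2`
(flip `i` in `x` and `j ≠ i` in `y`), so for `M` avoiding distance `2` this map is injective and
`|M| · n ≤ 2^n`. -/

open Finset Function

variable {ι β : Type*} [DecidableEq ι]

theorem hammingDist_eq_two_of_update_eq_update [Fintype ι] [DecidableEq β] {x y : ι → β}
    {i j : ι} {a b : β} (hij : i ≠ j) (ha : a ≠ x i) (hb : b ≠ y j) (h : update x i a = update y j b) :
    hammingDist x y = 2 := by
  have hi : y i = a := by simpa [update_of_ne hij] using (congrFun h i).symm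
  have hj : x j = b := by simpa [update_of_ne hij.symm] using congrFun h j
  have hdiff : univ.filter (fun k => x k ≠ y k) = {i, j} := by
    ext k
    by_cases hki : k = i
    · subst hki; simp [hi, ha.symm]
    by_cases hkj : k = j
    · subst hkj; simp [hj, hb]
    have hk : x k = y k := by simpa [update_of_ne hki, update_of_ne hkj] using congrFun h k
    simp [hk, hki, hkj]
  rw [hammingDist, hdiff, card_pair hij]

def flipBit (i : ι) (x : ι → Bool) : ι → Bool :=
  update x i (!x i)

theorem flipBit_involutive (i : ι) : Involutive (flipBit i) := by
  intro x
  simp [flipBit]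

theorem hammingDist_eq_two_of_flipBit_eq [Fintype ι] {x y : ι → Bool} {i j : ι} (hij : i ≠ j)
    (h : flipBit i x = flipBit j y) : hammingDist x y = 2 :=
  hammingDist_eq_two_of_update_eq_update hij (by simp) (by simp) h

theorem injOn_flipBit_of_avoids_hammingDist_two [Fintype ι] {M : Finset (ι → Bool)}
    (h : ∀ x ∈ M, ∀ y ∈ M, hammingDist x y ≠ 2) :
    Set.InjOn (fun p : (ι → Bool) × ι => flipBit p.2 p.1) ↑(M ×ˢ (univ : Finset ι)) := by
  rintro ⟨x, i⟩ hx ⟨y, j⟩ hy hxy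
  simp only [coe_product, coe_univ, Set.mem_prod, mem_coe, Set.mem_univ, and_true] at hx hy
  obtain rfl | hij := eq_or_ne i j
  · rw [(flipBit_involutive i).injective (a₁ := x) (a₂ := y) hxy]
  · exact absurd (hammingDist_eq_two_of_flipBit_eq hij hxy) (h x hx y hy)

theorem card_mul_card_le_of_avoids_hammingDist_two [Fintype ι] (M : Finset (ι → Bool))
    (h : ∀ x ∈ M, ∀ y ∈ M, hammingDist x y ≠ 2) :
    #M * Fintype.card ι ≤ 2 ^ Fintype.card ι :=
  calc #M * Fintype.card ι = #(M ×ˢ (univ : Finset ι)) := by rw [card_product, card_univ]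
    _ ≤ #(univ : Finset (ι → Bool)) :=
      card_le_card_of_injOn _ (fun _ _ => mem_coe.2 (mem_univ _))
        (injOn_flipBit_of_avoids_hammingDist_two h)
    _ = 2 ^ Fintype.card ι := by simp

/-- If `M ⊆ {0,1}^n` (with `n ≥ 1`) avoids Hamming distance `2`, then `|M| ≤ 2^n / n`. -/
theorem card_le_of_avoids_hammingDist_two (n : ℕ) (hn : 1 ≤ n) (M : Finset (Fin n → Bool))
    (h : ∀ x ∈ M, ∀ y ∈ M, hammingDist x y ≠ 2) :
    (M.card : ℝ) ≤ 2 ^ n / n := by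
  have hcard := card_mul_card_le_of_avoids_hammingDist_two M h
  rw [Fintype.card_fin] at hcard
  rw [le_div_iff₀ (by exact_mod_cast hn)]
  exact_mod_cast hcard
end

section
/- Let n ∈ ℕ and let M ⊆ {0,1}^n be a set such that no two elements of M have Hamming distance exactly 2. Then for every y ∈ {0,1}^n with y ∉ M, the number of elements x ∈ M with Hamming distance dist(x,y) = 2 is at most ⌊n/2⌋. -/
/-!
For `x` at Hamming distance `2` from `y`, let `D x` be the pair of coordinates where `x` differs
from `y`. Over `Bool`, `x` is determined by `D x`, and `dist(x, x') = |D x ∆ D x'|`. Two distinct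
pairs have symmetric difference of size `2` unless they are disjoint, so the pairs `D x` for
`x ∈ M` are pairwise disjoint, and there are at most `⌊n/2⌋` of them.
-/

open Finset

def diffSet {ι β : Type*} [Fintype ι] [DecidableEq β] (x y : ι → β) : Finset ι :=
  {i | x i ≠ y i}

theorem Finset.card_symmDiff_add_two_mul_card_inter {α : Type*} [DecidableEq α]
    (s t : Finset α) : #(symmDiff s t) + 2 * #(s ∩ t) = #s + #t := by
  rw [symmDiff_eq_sup_sdiff_inf, sup_eq_union, inf_eq_inter,
    card_sdiff_of_subset (inter_subset_left.trans subset_union_left),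
    ← card_union_add_card_inter]
  have := card_le_card (inter_subset_union (s := s) (t := t))
  omega

theorem Finset.eq_or_disjoint_of_card_symmDiff_ne_two {α : Type*} [DecidableEq α]
    {s t : Finset α} (hs : #s = 2) (ht : #t = 2) (hst : #(symmDiff s t) ≠ 2) :
    s = t ∨ Disjoint s t := by
  have hsum := card_symmDiff_add_two_mul_card_inter s t
  have hle := card_le_card (inter_subset_left (s₁ := s) (s₂ := t))
  obtain h0 | h2 : #(s ∩ t) = 0 ∨ #(s ∩ t) = 2 := by omega
  · exact Or.inr (disjoint_iff_inter_eq_empty.2 (card_eq_zero.1 h0))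
  · left
    rw [← eq_of_subset_of_card_le inter_subset_left (by omega : #s ≤ #(s ∩ t)),
      eq_of_subset_of_card_le inter_subset_right (by omega : #t ≤ #(s ∩ t))]

theorem Finset.mul_card_le_card_of_pairwiseDisjoint {α ι : Type*} [Fintype ι] [DecidableEq ι]
    {S : Finset α} {f : α → Finset ι} {k : ℕ} (hk : ∀ a ∈ S, k ≤ #(f a))
    (hf : (S : Set α).PairwiseDisjoint f) : k * #S ≤ Fintype.card ι :=
  calc k * #S = ∑ _ ∈ S, k := by rw [sum_const, smul_eq_mul, mul_comm]
    _ ≤ ∑ a ∈ S, #(f a) := sum_le_sum hk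
    _ = #(S.biUnion f) := (card_biUnion hf).symm
    _ ≤ Fintype.card ι := card_le_univ _

section Bool

variable {ι : Type*} [Fintype ι] [DecidableEq ι]

theorem hammingDist_eq_card_symmDiff_diffSet (x x' y : ι → Bool) :
    hammingDist x x' = #(symmDiff (diffSet x y) (diffSet x' y)) := by
  unfold hammingDist diffSet
  congr 1
  ext i
  simp only [mem_filter, mem_univ, true_and, mem_symmDiff]
  cases x i <;> cases x' i <;> cases y i <;> decide

theorem diffSet_injective (y : ι → Bool) : Function.Injective (diffSet · y) := by
  intro x x' hxx'
  rw [← hammingDist_eq_zero, hammingDist_eq_card_symmDiff_diffSet x x' y]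
  simp only at hxx'
  simp [hxx']

end Bool

theorem degree_le_of_avoids_hammingDist_two_general (n : ℕ) (M : Finset (Fin n → Bool))
    (h : ∀ x ∈ M, ∀ y ∈ M, hammingDist x y ≠ 2)
    (y : Fin n → Bool) :
    (M.filter (fun x => hammingDist x y = 2)).card ≤ n / 2 := by
  set S := M.filter (fun x => hammingDist x y = 2)
  have hcard : ∀ x ∈ S, #(diffSet x y) = 2 := fun x hx => (mem_filter.1 hx).2
  have hdisj : (S : Set (Fin n → Bool)).PairwiseDisjoint (diffSet · y) := by
    intro x hx x' hx' hne
    refine (eq_or_disjoint_of_card_symmDiff_ne_two (hcard x hx) (hcard x' hx') ?_).resolve_left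
      (fun e => hne (diffSet_injective y e))
    rw [← hammingDist_eq_card_symmDiff_diffSet]
    exact h x (mem_filter.1 hx).1 x' (mem_filter.1 hx').1
  have h2S := mul_card_le_card_of_pairwiseDisjoint (fun x hx => (hcard x hx).ge) hdisj
  rw [Fintype.card_fin] at h2S
  omega

/-- If `M ⊆ {0,1}^n` avoids Hamming distance `2`, then every `y ∉ M` has at most `⌊n/2⌋`
elements of `M` at Hamming distance exactly `2`. -/
theorem degree_le_of_avoids_hammingDist_two (n : ℕ) (M : Finset (Fin n → Bool))
    (h : ∀ x ∈ M, ∀ y ∈ M, hammingDist x y ≠ 2)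
    (y : Fin n → Bool) (hy : y ∉ M) :
    (M.filter (fun x => hammingDist x y = 2)).card ≤ n / 2 :=
  degree_le_of_avoids_hammingDist_two_general n M h y
end

section
/- Let n ∈ ℕ with n ≥ 1 and let x, y ∈ {0,1}^n be distinct vectors of the same weight w. If Σ_{i : x_i = 1} i ≡ Σ_{i : y_i = 1} i (mod n), where the coordinates are indexed by 1,…,n, then the Hamming distance between x and y is at least 4. -/
/-!
Two distinct vectors of equal weight at Hamming distance less than 4 are at distance exactly 2,
so one is obtained from the other by moving a single 1 from position `i` to position `j ≠ i`.
This changes the sum of positions by `j - i`, which is nonzero modulo `n` because the positions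
`1, …, n` are pairwise incongruent modulo `n`.
-/

open Finset

section BoolVector

variable {ι : Type*} [Fintype ι]

def trueSupport (x : ι → Bool) : Finset ι := univ.filter (fun i => x i = true)

theorem trueSupport_injective : Function.Injective (trueSupport (ι := ι)) := by
  intro x y h
  funext i
  simpa [trueSupport, Finset.ext_iff] using congrArg (i ∈ ·) h

theorem hammingDist_eq_card_sdiff_add_card_sdiff [DecidableEq ι] (x y : ι → Bool) :
    hammingDist x y = #(trueSupport x \ trueSupport y) + #(trueSupport y \ trueSupport x) := by
  rw [← card_union_of_disjoint disjoint_sdiff_sdiff]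
  unfold hammingDist
  congr 1
  ext i
  simp only [trueSupport, mem_filter, mem_univ, true_and, mem_union, mem_sdiff]
  cases x i <;> cases y i <;> decide

end BoolVector

namespace Finset

variable {α : Type*} [DecidableEq α] {A B : Finset α}

theorem exists_sdiff_eq_singleton_of_card_eq (hcard : #A = #B) (hne : A ≠ B)
    (hsmall : #(A \ B) + #(B \ A) < 4) : ∃ i j, A \ B = {i} ∧ B \ A = {j} := by
  have hsymm : #(A \ B) = #(B \ A) := card_sdiff_comm hcard
  have hpos : #(A \ B) ≠ 0 := fun h =>
    hne (eq_of_subset_of_card_le (sdiff_eq_empty_iff_subset.mp (card_eq_zero.mp h)) hcard.ge)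
  have hone : #(A \ B) = 1 := by omega
  obtain ⟨i, hi⟩ := card_eq_one.mp hone
  obtain ⟨j, hj⟩ := card_eq_one.mp (hsymm ▸ hone)
  exact ⟨i, j, hi, hj⟩

theorem sum_eq_sum_inter_add_of_sdiff_eq_singleton {M : Type*} [AddCommMonoid M] {f : α → M}
    {i : α} (h : A \ B = {i}) : ∑ k ∈ A, f k = ∑ k ∈ A ∩ B, f k + f i := by
  rw [← sum_inter_add_sum_sdiff A B, h, sum_singleton]

end Finset

theorem Fin.eq_of_val_add_one_modEq {n : ℕ} {i j : Fin n}
    (h : (i : ℕ) + 1 ≡ (j : ℕ) + 1 [MOD n]) : i = j :=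
  Fin.ext <| (Nat.ModEq.add_right_cancel' 1 h).eq_of_lt_of_lt i.isLt j.isLt

theorem hammingDist_ge_four_of_same_weight_same_norm_general (n : ℕ)
    (x y : Fin n → Bool) (hxy : x ≠ y) (w : ℕ)
    (hx : (Finset.univ.filter (fun i => x i = true)).card = w)
    (hy : (Finset.univ.filter (fun i => y i = true)).card = w)
    (hmod : (∑ i ∈ Finset.univ.filter (fun i => x i = true), ((i : ℕ) + 1)) % n =
            (∑ i ∈ Finset.univ.filter (fun i => y i = true), ((i : ℕ) + 1)) % n) :
    4 ≤ hammingDist x y := by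
  change #(trueSupport x) = w at hx
  change #(trueSupport y) = w at hy
  change ∑ i ∈ trueSupport x, ((i : ℕ) + 1) ≡ ∑ i ∈ trueSupport y, ((i : ℕ) + 1) [MOD n] at hmod
  by_contra! hlt
  rw [hammingDist_eq_card_sdiff_add_card_sdiff] at hlt
  obtain ⟨i, j, hi, hj⟩ :=
    exists_sdiff_eq_singleton_of_card_eq (hx.trans hy.symm) (trueSupport_injective.ne hxy) hlt
  rw [sum_eq_sum_inter_add_of_sdiff_eq_singleton hi, sum_eq_sum_inter_add_of_sdiff_eq_singleton hj,
    inter_comm] at hmod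
  have hij : i = j := Fin.eq_of_val_add_one_modEq (Nat.ModEq.add_left_cancel' _ hmod)
  have hiB : i ∉ trueSupport y := (mem_sdiff.mp (hi ▸ mem_singleton_self i)).2
  have hjB : j ∈ trueSupport y := (mem_sdiff.mp (hj ▸ mem_singleton_self j)).1
  exact hiB (hij ▸ hjB)

/-- If `x ≠ y ∈ {0,1}^n` have the same weight and the sums of the positions (indexed
`1,…,n`) of their non-zero entries are congruent mod `n`, then `dist(x,y) ≥ 4`. -/
theorem hammingDist_ge_four_of_same_weight_same_norm (n : ℕ) (hn : 1 ≤ n)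
    (x y : Fin n → Bool) (hxy : x ≠ y) (w : ℕ)
    (hx : (Finset.univ.filter (fun i => x i = true)).card = w)
    (hy : (Finset.univ.filter (fun i => y i = true)).card = w)
    (hmod : (∑ i ∈ Finset.univ.filter (fun i => x i = true), ((i : ℕ) + 1)) % n =
            (∑ i ∈ Finset.univ.filter (fun i => y i = true), ((i : ℕ) + 1)) % n) :
    4 ≤ hammingDist x y :=
  hammingDist_ge_four_of_same_weight_same_norm_general n x y hxy w hx hy hmod
end
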